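/- Suppose c is integer-valued, ℓ takes values in ℤ ∪ {−∞}, and u takes values in ℤ ∪ {+∞}. Then for every δ ≥ 0 the deviation vector p^δ (for the weighted bottleneck Hamming distance setting) is integer-valued; consequently, if a feasible deviation vector exists, the minimum of H_{∞,w} over integer-valued feasible deviation vectors equals the minimum of H_{∞,w} over all feasible deviation vectors. -/

import Mathlib

open Finset

noncomputable section

variable {S : Type*}

/-- A deviation vector `p` is feasible: it respects the bounds `l ≤ p ≤ u`
(interpreted in the extended reals) and makes `Fstar` a minimum-cost member
of `𝓕` with respect to `c - p`. -/
def IsFeasibleDev (𝓕 : Finset (Finset S)) (Fstar : Finset S)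
    (c : S → ℝ) (l u : S → EReal) (p : S → ℝ) : Prop :=
  (∀ s, l s ≤ (p s : EReal) ∧ (p s : EReal) ≤ u s) ∧
  ∀ F ∈ 𝓕, ∑ s ∈ Fstar, (c s - p s) ≤ ∑ s ∈ F, (c s - p s)

/-- The weighted bottleneck Hamming distance `H_{∞,w}(p) = max {w(s) : p(s) ≠ 0}`,
with the maximum over the empty set taken to be `0`. -/
def Hbot [Fintype S] (w p : S → ℝ) : ℝ :=
  WithBot.unbotD 0 ((((univ : Finset S).filter fun s => p s ≠ 0)).image w).max

/-- The constant `m` from the bottleneck Hamming distance setting. -/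
def mB [DecidableEq S] (𝓕 : Finset (Finset S)) (Fstar : Finset S)
    (c : S → ℝ) (l u : S → EReal) : ℝ :=
  max 0 (WithBot.unbotD 0 (𝓕.image fun F =>
    (∑ s ∈ Fstar, c s) - (∑ s ∈ F, c s)
      - ∑ s ∈ (Fstar \ F).filter (fun s => u s < 0), (u s).toReal
      + ∑ s ∈ (F \ Fstar).filter (fun s => 0 < l s), (l s).toReal).max)

/-- The special deviation vector `p^δ` of the bottleneck Hamming distance setting. -/
def pB [DecidableEq S] (𝓕 : Finset (Finset S)) (Fstar : Finset S)
    (c : S → ℝ) (l u : S → EReal) (w : S → ℝ) (δ : ℝ) (s : S) : ℝ :=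
  if w s ≤ δ then
    if s ∈ Fstar then (if u s = ⊤ then mB 𝓕 Fstar c l u else (u s).toReal)
    else (if l s = ⊥ then -(mB 𝓕 Fstar c l u) else (l s).toReal)
  else 0

/-!
`p^δ` is integral because `m` is: it is a maximum of `0` and of integer combinations of values
of `c`, `ℓ` and `u`. For the second claim, `H_{∞,w}` takes only the finitely many values
`0, w(s)`, so some feasible `q` minimises it. Rounding `q` up on `F*` and down off `F*` keeps it
within the integral bounds, can only lower the cost of `F*` relative to every other `F`, and
keeps zero entries zero, so the rounded vector is feasible, integral, and no worse than `q`.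
-/

theorem Finset.unbotD_max_rec {α : Type*} [LinearOrder α] {P : α → Prop} {d : α}
    {T : Finset α} (hd : P d) (hT : ∀ x ∈ T, P x) : P (T.max.unbotD d) := by
  rcases h : T.max with _ | a
  · exact hd
  · exact hT a (mem_of_max h)

theorem Set.exists_forall_le_of_finite_image {α β : Type*} [LinearOrder β] {s : Set α}
    {f : α → β} (hf : (f '' s).Finite) (hs : s.Nonempty) :
    ∃ a ∈ s, ∀ b ∈ s, f a ≤ f b := by
  obtain ⟨_, ⟨a, ha, rfl⟩, hmin⟩ := Set.exists_min_image _ id hf (hs.image f)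
  exact ⟨a, ha, fun b hb => hmin _ ⟨b, hb, rfl⟩⟩

theorem Subring.mem_bot_iff_exists_int {R : Type*} [Ring R] {x : R} :
    x ∈ (⊥ : Subring R) ↔ ∃ z : ℤ, x = z := by
  simp only [Subring.mem_bot, eq_comm]

namespace EReal

-- `EReal.toReal` sends `⊤` and `⊥` to `0`, so neither lemma needs the value to be finite.
theorem toReal_mem_bot_of_eq_top_or_int {x : EReal}
    (hx : x = ⊤ ∨ ∃ z : ℤ, x = ((z : ℝ) : EReal)) :
    x.toReal ∈ (⊥ : Subring ℝ) := by
  rcases hx with rfl | ⟨z, rfl⟩ <;> simp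

theorem toReal_mem_bot_of_eq_bot_or_int {x : EReal}
    (hx : x = ⊥ ∨ ∃ z : ℤ, x = ((z : ℝ) : EReal)) :
    x.toReal ∈ (⊥ : Subring ℝ) := by
  rcases hx with rfl | ⟨z, rfl⟩ <;> simp

theorem ceil_le_of_eq_top_or_int {x : ℝ} {u : EReal}
    (hu : u = ⊤ ∨ ∃ z : ℤ, u = ((z : ℝ) : EReal))
    (hxu : (x : EReal) ≤ u) : ((⌈x⌉ : ℝ) : EReal) ≤ u := by
  rcases hu with rfl | ⟨z, rfl⟩
  · exact le_top
  · exact_mod_cast Int.ceil_le.2 (by exact_mod_cast hxu)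

theorem le_floor_of_eq_bot_or_int {x : ℝ} {l : EReal}
    (hl : l = ⊥ ∨ ∃ z : ℤ, l = ((z : ℝ) : EReal))
    (hlx : l ≤ (x : EReal)) : l ≤ ((⌊x⌋ : ℝ) : EReal) := by
  rcases hl with rfl | ⟨z, rfl⟩
  · exact bot_le
  · exact_mod_cast Int.le_floor.2 (by exact_mod_cast hlx)

end EReal

section Hbot

variable [Fintype S] {w : S → ℝ}

theorem Hbot_mem_insert_image (w p : S → ℝ) : Hbot w p ∈ insert 0 (univ.image w) :=
  unbotD_max_rec (P := (· ∈ insert 0 (univ.image w))) (mem_insert_self 0 _) fun _ hx =>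
    mem_insert_of_mem (image_subset_image (filter_subset _ _) hx)

theorem Hbot_nonneg (hw : ∀ s, 0 ≤ w s) (p : S → ℝ) : 0 ≤ Hbot w p :=
  unbotD_max_rec (P := (0 ≤ ·)) le_rfl fun _ hx => by
    obtain ⟨s, -, rfl⟩ := mem_image.1 hx
    exact hw s

theorem le_Hbot {p : S → ℝ} {s : S} (hs : p s ≠ 0) : w s ≤ Hbot w p := by
  have hmem : w s ∈ (univ.filter fun t => p t ≠ 0).image w :=
    mem_image_of_mem w (mem_filter.2 ⟨mem_univ s, hs⟩)
  rw [Hbot, ← coe_max' ⟨_, hmem⟩, WithBot.unbotD_coe]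
  exact le_max' _ _ hmem

theorem Hbot_mono (hw : ∀ s, 0 ≤ w s) {p q : S → ℝ} (hpq : ∀ s, p s ≠ 0 → q s ≠ 0) :
    Hbot w p ≤ Hbot w q :=
  unbotD_max_rec (P := (· ≤ Hbot w q)) (Hbot_nonneg hw q) fun _ hx => by
    obtain ⟨s, hs, rfl⟩ := mem_image.1 hx
    exact le_Hbot (hpq s (mem_filter.1 hs).2)

theorem exists_Hbot_minimizer (w : S → ℝ) (P : (S → ℝ) → Prop) (hP : ∃ p, P p) :
    ∃ p, P p ∧ ∀ q, P q → Hbot w p ≤ Hbot w q := by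
  have hfin : (Hbot w '' {p | P p}).Finite :=
    (insert 0 (univ.image w)).finite_toSet.subset <| by
      rintro _ ⟨p, -, rfl⟩
      exact Hbot_mem_insert_image w p
  exact Set.exists_forall_le_of_finite_image hfin hP

end Hbot

section Feasibility

variable [DecidableEq S] {𝓕 : Finset (Finset S)} {Fstar : Finset S} {c : S → ℝ} {l u : S → EReal}

theorem sum_sub_le_sum_sub_of_le_of_ge {p q : S → ℝ} {F : Finset S}
    (hq : ∑ s ∈ Fstar, (c s - q s) ≤ ∑ s ∈ F, (c s - q s))
    (hin : ∀ s ∈ Fstar, q s ≤ p s) (hout : ∀ s ∉ Fstar, p s ≤ q s) :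
    ∑ s ∈ Fstar, (c s - p s) ≤ ∑ s ∈ F, (c s - p s) := by
  have hq' := sum_sdiff_sub_sum_sdiff (s₁ := F) (s₂ := Fstar) (f := fun s => c s - q s)
  have hp' := sum_sdiff_sub_sum_sdiff (s₁ := F) (s₂ := Fstar) (f := fun s => c s - p s)
  have hFstar : ∑ s ∈ Fstar \ F, (c s - p s) ≤ ∑ s ∈ Fstar \ F, (c s - q s) :=
    sum_le_sum fun s hs => by linarith [hin s (mem_sdiff.1 hs).1]
  have hF : ∑ s ∈ F \ Fstar, (c s - q s) ≤ ∑ s ∈ F \ Fstar, (c s - p s) :=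
    sum_le_sum fun s hs => by linarith [hout s (mem_sdiff.1 hs).2]
  linarith

def roundAway (Fstar : Finset S) (q : S → ℝ) (s : S) : ℤ :=
  if s ∈ Fstar then ⌈q s⌉ else ⌊q s⌋

theorem roundAway_ne_zero {q : S → ℝ} {s : S} (h : (roundAway Fstar q s : ℝ) ≠ 0) : q s ≠ 0 := by
  contrapose! h
  simp [roundAway, h]

theorem IsFeasibleDev.roundAway {q : S → ℝ} (hq : IsFeasibleDev 𝓕 Fstar c l u q)
    (hlint : ∀ s, l s = ⊥ ∨ ∃ z : ℤ, l s = ((z : ℝ) : EReal))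
    (huint : ∀ s, u s = ⊤ ∨ ∃ z : ℤ, u s = ((z : ℝ) : EReal)) :
    IsFeasibleDev 𝓕 Fstar c l u fun s => (roundAway Fstar q s : ℝ) := by
  refine ⟨fun s => ?_, fun F hF => sum_sub_le_sum_sub_of_le_of_ge (hq.2 F hF) ?_ ?_⟩
  · obtain ⟨hls, hus⟩ := hq.1 s
    by_cases hs : s ∈ Fstar
    · simp only [_root_.roundAway, hs, if_true]
      exact ⟨hls.trans (by exact_mod_cast Int.le_ceil _),
        EReal.ceil_le_of_eq_top_or_int (huint s) hus⟩
    · simp only [_root_.roundAway, hs, if_false]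
      exact ⟨EReal.le_floor_of_eq_bot_or_int (hlint s) hls,
        le_trans (by exact_mod_cast Int.floor_le _) hus⟩
  · intro s hs
    simpa [_root_.roundAway, hs] using Int.le_ceil (q s)
  · intro s hs
    simpa [_root_.roundAway, hs] using Int.floor_le (q s)

end Feasibility

theorem mB_mem_bot [DecidableEq S] {𝓕 : Finset (Finset S)} {Fstar : Finset S} {c : S → ℝ}
    {l u : S → EReal} (hc : ∀ s, ∃ z : ℤ, c s = (z : ℝ))
    (hlint : ∀ s, l s = ⊥ ∨ ∃ z : ℤ, l s = ((z : ℝ) : EReal))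
    (huint : ∀ s, u s = ⊤ ∨ ∃ z : ℤ, u s = ((z : ℝ) : EReal)) :
    mB 𝓕 Fstar c l u ∈ (⊥ : Subring ℝ) := by
  have hc' : ∀ s, c s ∈ (⊥ : Subring ℝ) := fun s => Subring.mem_bot_iff_exists_int.2 (hc s)
  refine max_rec' (· ∈ (⊥ : Subring ℝ)) (zero_mem _) ?_
  refine unbotD_max_rec (P := (· ∈ (⊥ : Subring ℝ))) (zero_mem _) fun _ hx => ?_
  obtain ⟨F, -, rfl⟩ := mem_image.1 hx
  refine add_mem (sub_mem (sub_mem ?_ ?_) ?_) ?_ <;> refine Subring.sum_mem _ fun s _ => ?_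
  exacts [hc' s, hc' s, EReal.toReal_mem_bot_of_eq_top_or_int (huint s),
    EReal.toReal_mem_bot_of_eq_bot_or_int (hlint s)]

theorem pB_mem_bot [DecidableEq S] {𝓕 : Finset (Finset S)} {Fstar : Finset S} {c : S → ℝ}
    {l u : S → EReal} (w : S → ℝ) (δ : ℝ) (s : S) (hc : ∀ s, ∃ z : ℤ, c s = (z : ℝ))
    (hlint : ∀ s, l s = ⊥ ∨ ∃ z : ℤ, l s = ((z : ℝ) : EReal))
    (huint : ∀ s, u s = ⊤ ∨ ∃ z : ℤ, u s = ((z : ℝ) : EReal)) :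
    pB 𝓕 Fstar c l u w δ s ∈ (⊥ : Subring ℝ) := by
  have hm := mB_mem_bot (𝓕 := 𝓕) (Fstar := Fstar) hc hlint huint
  unfold pB
  split_ifs
  exacts [hm, EReal.toReal_mem_bot_of_eq_top_or_int (huint s), neg_mem hm,
    EReal.toReal_mem_bot_of_eq_bot_or_int (hlint s), zero_mem _]

theorem bottleneck_integrality_general [Fintype S] [DecidableEq S]
    (𝓕 : Finset (Finset S)) (Fstar : Finset S) (c w : S → ℝ) (l u : S → EReal)
    (hw : ∀ s, 0 < w s)
    (hc : ∀ s, ∃ z : ℤ, c s = (z : ℝ))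
    (hlint : ∀ s, l s = ⊥ ∨ ∃ z : ℤ, l s = ((z : ℝ) : EReal))
    (huint : ∀ s, u s = ⊤ ∨ ∃ z : ℤ, u s = ((z : ℝ) : EReal)) :
    (∀ δ : ℝ, 0 ≤ δ → ∀ s : S, ∃ z : ℤ, pB 𝓕 Fstar c l u w δ s = (z : ℝ)) ∧
    ((∃ p : S → ℝ, IsFeasibleDev 𝓕 Fstar c l u p) →
      ∃ p : S → ℝ, IsFeasibleDev 𝓕 Fstar c l u p ∧
        (∀ s : S, ∃ z : ℤ, p s = (z : ℝ)) ∧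
        ∀ q : S → ℝ, IsFeasibleDev 𝓕 Fstar c l u q → Hbot w p ≤ Hbot w q) := by
  refine ⟨fun δ _ s => Subring.mem_bot_iff_exists_int.1 (pB_mem_bot w δ s hc hlint huint),
    fun hfeas => ?_⟩
  obtain ⟨q, hq, hqmin⟩ := exists_Hbot_minimizer w _ hfeas
  refine ⟨_, hq.roundAway hlint huint, fun s => ⟨_, rfl⟩, fun q' hq' => ?_⟩
  exact (Hbot_mono (fun s => (hw s).le) fun s => roundAway_ne_zero).trans (hqmin q' hq')

theorem bottleneck_integrality [Fintype S] [DecidableEq S]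
    (𝓕 : Finset (Finset S)) (Fstar : Finset S) (c w : S → ℝ) (l u : S → EReal)
    (hw : ∀ s, 0 < w s) (hl : ∀ s, l s ≠ ⊤) (hu : ∀ s, u s ≠ ⊥)
    (hlu : ∀ s, l s ≤ u s) (h𝓕 : 𝓕.Nonempty) (hF : Fstar ∈ 𝓕)
    (hc : ∀ s, ∃ z : ℤ, c s = (z : ℝ))
    (hlint : ∀ s, l s = ⊥ ∨ ∃ z : ℤ, l s = ((z : ℝ) : EReal))
    (huint : ∀ s, u s = ⊤ ∨ ∃ z : ℤ, u s = ((z : ℝ) : EReal)) :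
    (∀ δ : ℝ, 0 ≤ δ → ∀ s : S, ∃ z : ℤ, pB 𝓕 Fstar c l u w δ s = (z : ℝ)) ∧
    ((∃ p : S → ℝ, IsFeasibleDev 𝓕 Fstar c l u p) →
      ∃ p : S → ℝ, IsFeasibleDev 𝓕 Fstar c l u p ∧
        (∀ s : S, ∃ z : ℤ, p s = (z : ℝ)) ∧
        ∀ q : S → ℝ, IsFeasibleDev 𝓕 Fstar c l u q → Hbot w p ≤ Hbot w q) :=
  bottleneck_integrality_general 𝓕 Fstar c w l u hw hc hlint huint
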